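/- Let H be a real Hilbert space, let V be a closed vector subspace of H with orthogonal projection P_V, let A : H → 2^H be maximally monotone, let γ > 0, and set 𝒜_γ = (γA)_V. Then for every δ > 0 and every x, p, q ∈ H such that x = p + γq and (P_V q)/δ + P_{V⊥} q ∈ A(P_V p + (P_{V⊥} p)/δ), one has J_{δ𝒜_γ} x = P_V p + γ P_{V⊥} q. -/

import Mathlib

/-!
With `u = P_V p + γ P_{V⊥} q` one has `x - u = P_{V⊥} p + γ P_V q`. The partial inverse only
exchanges the `V⊥`-components of argument and value, so `δ⁻¹ (x - u) ∈ (γA)_V u` unfolds to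
`γ (δ⁻¹ P_V q + P_{V⊥} q) ∈ γ A (P_V p + δ⁻¹ P_{V⊥} p)`, which is `γ` times the hypothesis.
-/

open scoped Pointwise RealInnerProductSpace

noncomputable section

variable {H : Type*} [NormedAddCommGroup H] [InnerProductSpace ℝ H] [CompleteSpace H]

/-- A set-valued operator is monotone. -/
def MonotoneSV (A : H → Set H) : Prop :=
  ∀ ⦃x y u v : H⦄, u ∈ A x → v ∈ A y → 0 ≤ ⟪x - y, u - v⟫

/-- A set-valued operator is maximally monotone. -/
def MaxMonotone (A : H → Set H) : Prop :=
  MonotoneSV A ∧ ∀ x u : H, (∀ y v, v ∈ A y → 0 ≤ ⟪x - y, u - v⟫) → u ∈ A x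

/-- The partial inverse of `A` with respect to the closed subspace `V`. -/
def partialInv (V : Submodule ℝ H) [V.HasOrthogonalProjection] (A : H → Set H) :
    H → Set H := fun x =>
  {y | (Submodule.orthogonalProjectionOnto V y : H) + (Submodule.orthogonalProjectionOnto Vᗮ x : H)
      ∈ A ((Submodule.orthogonalProjectionOnto V x : H) + (Submodule.orthogonalProjectionOnto Vᗮ y : H))}

section Decomposition

variable {E : Type*} [NormedAddCommGroup E] [InnerProductSpace ℝ E]
  {V : Submodule ℝ E} [V.HasOrthogonalProjection] {a b c d : E}

theorem orthogonalProjectionOnto_add_of_mem_of_mem_orthogonal (ha : a ∈ V) (hb : b ∈ Vᗮ) :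
    (Submodule.orthogonalProjectionOnto V (a + b) : E) = a :=
  Submodule.eq_starProjection_of_mem_orthogonal' ha hb rfl

theorem orthogonalProjectionOnto_orthogonal_add_of_mem_of_mem_orthogonal (ha : a ∈ V)
    (hb : b ∈ Vᗮ) : (Submodule.orthogonalProjectionOnto Vᗮ (a + b) : E) = b :=
  Submodule.eq_starProjection_of_mem_orthogonal' hb (V.le_orthogonal_orthogonal ha) (add_comm a b)

theorem add_mem_partialInv_add_iff (A : E → Set E) (ha : a ∈ V) (hb : b ∈ Vᗮ) (hc : c ∈ V)
    (hd : d ∈ Vᗮ) : c + d ∈ partialInv V A (a + b) ↔ c + b ∈ A (a + d) := by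
  simp only [partialInv, Set.mem_ofPred_eq,
    orthogonalProjectionOnto_add_of_mem_of_mem_orthogonal ha hb,
    orthogonalProjectionOnto_add_of_mem_of_mem_orthogonal hc hd,
    orthogonalProjectionOnto_orthogonal_add_of_mem_of_mem_orthogonal ha hb,
    orthogonalProjectionOnto_orthogonal_add_of_mem_of_mem_orthogonal hc hd]

end Decomposition

theorem stmt4_general (V : Submodule ℝ H) [CompleteSpace V] (A : H → Set H) (γ : ℝ)
    (δ : ℝ) (hδ : 0 < δ) (x p q : H)
    (hx : x = p + γ • q)
    (hpq : δ⁻¹ • (Submodule.orthogonalProjectionOnto V q : H) + (Submodule.orthogonalProjectionOnto Vᗮ q : H)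
      ∈ A ((Submodule.orthogonalProjectionOnto V p : H) + δ⁻¹ • (Submodule.orthogonalProjectionOnto Vᗮ p : H))) :
    -- `J_{δ 𝒜_γ} x = P_V p + γ P_{V⊥} q`, expressed through the characterization
    -- `u = J_{δ𝒜_γ} x ↔ x - u ∈ δ • 𝒜_γ u` of the (single-valued) resolvent of the
    -- maximally monotone operator `𝒜_γ = (γ A)_V`:
    x - ((Submodule.orthogonalProjectionOnto V p : H) + γ • (Submodule.orthogonalProjectionOnto Vᗮ q : H))
      ∈ δ • partialInv V (fun w => γ • A w)
          ((Submodule.orthogonalProjectionOnto V p : H) + γ • (Submodule.orthogonalProjectionOnto Vᗮ q : H)) := by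
  set Pp := (Submodule.orthogonalProjectionOnto V p : H)
  set Qp := (Submodule.orthogonalProjectionOnto Vᗮ p : H)
  set Pq := (Submodule.orthogonalProjectionOnto V q : H)
  set Qq := (Submodule.orthogonalProjectionOnto Vᗮ q : H)
  have hsub : x - (Pp + γ • Qq) = δ • (δ⁻¹ • (γ • Pq) + δ⁻¹ • Qp) := by
    have hp : Pp + Qp = p := Submodule.starProjection_add_starProjection_orthogonal p
    have hq : Pq + Qq = q := Submodule.starProjection_add_starProjection_orthogonal q
    rw [← smul_add, smul_inv_smul₀ hδ.ne', hx, ← hp, ← hq]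
    module
  rw [hsub]
  refine Set.smul_mem_smul_set <| (add_mem_partialInv_add_iff _ (Submodule.coe_mem _) ?_ ?_ ?_).2 ?_
  · exact Vᗮ.smul_mem γ (Submodule.coe_mem _)
  · exact V.smul_mem _ (V.smul_mem _ (Submodule.coe_mem _))
  · exact Vᗮ.smul_mem _ (Submodule.coe_mem _)
  · convert Set.smul_mem_smul_set (a := γ) hpq using 1
    module

theorem stmt4 (V : Submodule ℝ H) [CompleteSpace V] (A : H → Set H) (γ : ℝ) (hγ : 0 < γ)
    (hA : MaxMonotone A) (δ : ℝ) (hδ : 0 < δ) (x p q : H)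
    (hx : x = p + γ • q)
    (hpq : δ⁻¹ • (Submodule.orthogonalProjectionOnto V q : H) + (Submodule.orthogonalProjectionOnto Vᗮ q : H)
      ∈ A ((Submodule.orthogonalProjectionOnto V p : H) + δ⁻¹ • (Submodule.orthogonalProjectionOnto Vᗮ p : H))) :
    -- `J_{δ 𝒜_γ} x = P_V p + γ P_{V⊥} q`, expressed through the characterization
    -- `u = J_{δ𝒜_γ} x ↔ x - u ∈ δ • 𝒜_γ u` of the (single-valued) resolvent of the
    -- maximally monotone operator `𝒜_γ = (γ A)_V`:
    x - ((Submodule.orthogonalProjectionOnto V p : H) + γ • (Submodule.orthogonalProjectionOnto Vᗮ q : H))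
      ∈ δ • partialInv V (fun w => γ • A w)
          ((Submodule.orthogonalProjectionOnto V p : H) + γ • (Submodule.orthogonalProjectionOnto Vᗮ q : H)) :=
  stmt4_general V A γ δ hδ x p q hx hpq
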